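/- Let Γ^(n) denote the determinant of the n×n matrix with entries Γ^(n)_{i+1,k+1} = Γ((i+k+1)/2)(1 + (-1)^{i+k}), i,k = 0,…,n-1, where Γ is the Gamma function. Then Γ^(n) > 0 for all n ≥ 1. -/

import Mathlib

/-!
Since `∫ x^m e^{-x²} dx = Γ((m+1)/2)(1 + (-1)^m)/2`, the matrix is the Hankel moment matrix of
the weight `2e^{-x²}` on `ℝ`. Its quadratic form at `c ≠ 0` is `∫ p(x)² · 2e^{-x²} dx` with
`p = ∑ c_k x^k` a nonzero polynomial, which is positive because `p` has only finitely many roots.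
So the matrix is positive definite, and its determinant is positive.
-/

/-- The determinant Γ⁽ⁿ⁾ of the matrix with entries Γ((i+k+1)/2)(1+(-1)^{i+k}). -/
noncomputable def GammaDet (n : ℕ) : ℝ :=
  (Matrix.of fun i k : Fin n =>
    Real.Gamma (((i : ℝ) + (k : ℝ) + 1)/2) * (1 + (-1 : ℝ)^((i : ℕ) + (k : ℕ)))).det

open MeasureTheory Real Set
open scoped Matrix

lemma pow_add_neg_pow_eq_mul_abs_pow (x : ℝ) (m : ℕ) :
    x ^ m + (-x) ^ m = (1 + (-1) ^ m) * |x| ^ m := by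
  rcases le_or_gt 0 x with hx | hx
  · rw [abs_of_nonneg hx, neg_pow]; ring
  · rw [abs_of_neg hx, show x ^ m = (-1) ^ m * (-x) ^ m by rw [← neg_pow, neg_neg]]; ring

lemma integrable_pow_mul_exp_neg_sq (m : ℕ) :
    Integrable fun x : ℝ => x ^ m * exp (-x ^ 2) := by
  simpa using integrable_rpow_mul_exp_neg_mul_sq one_pos (s := m)
    (by linarith [m.cast_nonneg (α := ℝ)])

lemma integral_Ioi_pow_mul_exp_neg_sq (m : ℕ) :
    ∫ x in Ioi (0 : ℝ), x ^ m * exp (-x ^ 2) = Gamma ((m + 1) / 2) / 2 := by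
  have h := integral_rpow_mul_exp_neg_rpow two_pos (q := m) (by linarith [m.cast_nonneg (α := ℝ)])
  norm_num [rpow_natCast] at h
  rw [h]; ring

lemma integral_pow_mul_exp_neg_sq (m : ℕ) :
    ∫ x, x ^ m * exp (-x ^ 2) = Gamma ((m + 1) / 2) * (1 + (-1) ^ m) / 2 := by
  have hint := integrable_pow_mul_exp_neg_sq m
  have hsym : ∫ x : ℝ, (-x) ^ m * exp (-(-x) ^ 2) = ∫ x, x ^ m * exp (-x ^ 2) :=
    integral_neg_eq_self (fun x : ℝ => x ^ m * exp (-x ^ 2)) volume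
  have hsum : 2 * ∫ x, x ^ m * exp (-x ^ 2) = (1 + (-1) ^ m) * Gamma ((m + 1) / 2) := calc
    _ = (∫ x, x ^ m * exp (-x ^ 2)) + ∫ x : ℝ, (-x) ^ m * exp (-(-x) ^ 2) := by rw [hsym]; ring
    _ = ∫ x : ℝ, (1 + (-1) ^ m) * (|x| ^ m * exp (-|x| ^ 2)) := by
      rw [← integral_add hint hint.comp_neg]
      congr 1 with x
      rw [neg_sq, sq_abs, ← add_mul, pow_add_neg_pow_eq_mul_abs_pow, mul_assoc]
    _ = _ := by
      rw [integral_const_mul, integral_comp_abs (f := fun x => x ^ m * exp (-x ^ 2)),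
        integral_Ioi_pow_mul_exp_neg_sq]
      ring
  linear_combination hsum / 2

lemma exists_sum_mul_pow_ne_zero {R : Type*} [CommRing R] [IsDomain R] [Infinite R] {n : ℕ}
    {c : Fin n → R} (hc : c ≠ 0) : ∃ x, ∑ i, c i * x ^ (i : ℕ) ≠ 0 := by
  set p : Polynomial R := ∑ i, Polynomial.C (c i) * Polynomial.X ^ (i : ℕ)
  have hp : p ≠ 0 := by
    obtain ⟨j, hj⟩ := Function.ne_iff.mp hc
    intro h
    apply hj
    simpa [p, Polynomial.finsetSum_coeff, Polynomial.coeff_C_mul_X_pow, Fin.val_inj] using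
      congrArg (Polynomial.coeff · j) h
  by_contra! h
  exact hp (Polynomial.funext fun x => by simpa [p, Polynomial.eval_finsetSum] using h x)

lemma sq_sum_mul_pow_mul {n : ℕ} (c : Fin n → ℝ) (x y : ℝ) :
    (∑ i, c i * x ^ (i : ℕ)) ^ 2 * y = ∑ i, ∑ j, c i * c j * (x ^ ((i : ℕ) + j) * y) := by
  rw [sq, Finset.sum_mul_sum, Finset.sum_mul]
  refine Finset.sum_congr rfl fun i _ => ?_
  rw [Finset.sum_mul]
  refine Finset.sum_congr rfl fun j _ => ?_
  ring

noncomputable def momentMatrix (μ : Measure ℝ) (w : ℝ → ℝ) (n : ℕ) : Matrix (Fin n) (Fin n) ℝ :=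
  Matrix.of fun i j => ∫ x, x ^ ((i : ℕ) + j) * w x ∂μ

section MomentMatrix

variable {μ : Measure ℝ} {w : ℝ → ℝ}

lemma integrable_sq_sum_mul_pow_mul (hw : ∀ m : ℕ, Integrable (fun x => x ^ m * w x) μ)
    {n : ℕ} (c : Fin n → ℝ) : Integrable (fun x => (∑ i, c i * x ^ (i : ℕ)) ^ 2 * w x) μ := by
  simp_rw [sq_sum_mul_pow_mul]
  exact integrable_finsetSum _ fun i _ => integrable_finsetSum _ fun j _ => (hw _).const_mul _

lemma dotProduct_momentMatrix_mulVec (hw : ∀ m : ℕ, Integrable (fun x => x ^ m * w x) μ)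
    {n : ℕ} (c : Fin n → ℝ) :
    c ⬝ᵥ (momentMatrix μ w n *ᵥ c) = ∫ x, (∑ i, c i * x ^ (i : ℕ)) ^ 2 * w x ∂μ := by
  simp_rw [sq_sum_mul_pow_mul]
  rw [integral_finsetSum _ fun i _ => integrable_finsetSum _ fun j _ => (hw _).const_mul _]
  refine Finset.sum_congr rfl fun i _ => ?_
  rw [integral_finsetSum _ fun j _ => (hw _).const_mul _]
  simp only [momentMatrix, Matrix.mulVec, dotProduct, Matrix.of_apply, Finset.mul_sum,
    integral_const_mul]
  refine Finset.sum_congr rfl fun j _ => ?_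
  ring

theorem posDef_momentMatrix [μ.IsOpenPosMeasure] (hw_cont : Continuous w)
    (hw_pos : ∀ x, 0 < w x) (hw : ∀ m : ℕ, Integrable (fun x => x ^ m * w x) μ) (n : ℕ) :
    (momentMatrix μ w n).PosDef := by
  refine .of_dotProduct_mulVec_pos ?_ fun c hc => ?_
  · ext i j
    simp [momentMatrix, add_comm]
  obtain ⟨x₀, hx₀⟩ := exists_sum_mul_pow_ne_zero hc
  rw [star_trivial, dotProduct_momentMatrix_mulVec hw]
  exact integral_pos_of_integrable_nonneg_nonzero (x := x₀) (by fun_prop)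
    (integrable_sq_sum_mul_pow_mul hw c) (fun x => by have := hw_pos x; positivity)
    (mul_ne_zero (pow_ne_zero _ hx₀) (hw_pos x₀).ne')

end MomentMatrix

theorem stmt10 : ∀ n : ℕ, 1 ≤ n → 0 < GammaDet n := by
  intro n _
  have hgauss : GammaDet n = (momentMatrix volume (fun x => 2 * exp (-x ^ 2)) n).det := by
    rw [GammaDet, momentMatrix]
    congr with i k
    simp_rw [mul_left_comm _ (2 : ℝ), integral_const_mul,
      integral_pow_mul_exp_neg_sq]
    push_cast
    ring
  have hweight (m : ℕ) : Integrable (fun x : ℝ => x ^ m * (2 * exp (-x ^ 2))) :=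
    ((integrable_pow_mul_exp_neg_sq m).mul_const 2).congr (.of_forall fun x => by ring)
  rw [hgauss]
  exact (posDef_momentMatrix (by fun_prop) (fun x => by positivity) hweight n).det_pos
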